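/- arXiv:1908.05508 — 8 statements merged into one kernel-verified Lean document; each statement's English description precedes it below -/
import Mathlib

section
/- Let F be a field of characteristic 2 and let n = 2m+1 be an odd positive integer. Let F_n ∈ F[x] be the polynomial F_n(x) = Σ_{i=0}^{m} c_i x^{m−i}, where c_i is the image in F of the integer (n/(n−i))·binom(n−i, i). Then for every y ∈ F with y ≠ 0, (y+1)·y^m·F_n(y + y⁻¹) = y^n + 1. -/
open Polynomial


open Polynomial

def dd (n i : ℕ) : ℕ := (n * Nat.choose (n - i) i) / (n - i)

lemma cdiv_eq (n i : ℕ) (h1 : 1 ≤ i) (h2 : i < n) :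
    dd n i = Nat.choose (n - i) i + Nat.choose (n - i - 1) (i - 1) := by
  obtain ⟨t, rfl⟩ : ∃ t, i = t + 1 := ⟨i - 1, by omega⟩
  obtain ⟨s, hs⟩ : ∃ s, n - (t + 1) = s + 1 := ⟨n - (t+1) - 1, by omega⟩
  have key : (t + 1) * Nat.choose (s + 1) (t + 1) = (s + 1) * Nat.choose s t := by
    simpa [Nat.succ_eq_add_one, mul_comm] using (Nat.add_one_mul_choose_eq s t).symm
  have hmul : n * Nat.choose (s + 1) (t+1)
      = (Nat.choose (s+1) (t+1) + Nat.choose s t) * (s + 1) := by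
    have hn : n = (s + 1) + (t+1) := by omega
    nlinarith [key]
  rw [dd, hs, hmul, Nat.mul_div_cancel _ (by omega : 0 < s + 1)]
  simp [hs]

lemma pascal4 (k j : ℕ) (hk : 1 ≤ k) (hj : 1 ≤ j) :
    Nat.choose (k+2) (j+2) + Nat.choose (k+1) (j+1) + 2 * Nat.choose (k-1) (j-1)
      = Nat.choose k (j+2) + Nat.choose (k-1) (j+1) + Nat.choose k j
        + Nat.choose (k-1) (j-1) + 2 * Nat.choose (k+1) (j+1) := by
  obtain ⟨k', rfl⟩ : ∃ k', k = k' + 1 := ⟨k - 1, by omega⟩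
  obtain ⟨j', rfl⟩ : ∃ j', j = j' + 1 := ⟨j - 1, by omega⟩
  simp only [Nat.add_sub_cancel, Nat.choose_succ_succ, Nat.succ_eq_add_one,
    show j'+1+1 = j'+2 from rfl, show j'+2+1 = j'+3 from rfl]
  omega

lemma pascal0 (k : ℕ) (hk : 1 ≤ k) :
    Nat.choose (k+2) 2 + Nat.choose (k+1) 1
      = Nat.choose k 2 + Nat.choose (k-1) 1 + 1 + (2*k+2) := by
  obtain ⟨k', rfl⟩ : ∃ k', k = k' + 1 := ⟨k - 1, by omega⟩
  simp only [Nat.add_sub_cancel, Nat.choose_succ_succ, Nat.succ_eq_add_one,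
    Nat.choose_one_right, Nat.choose_zero_right, zero_add,
    show (1:ℕ)+1 = 2 from rfl]
  omega

lemma dd_zero (n : ℕ) (h : 1 ≤ n) : dd n 0 = 1 := by
  simp [dd, Nat.div_self (by omega : 0 < n)]

lemma dd_one (n : ℕ) (h : 2 ≤ n) : dd n 1 = n := by
  rw [cdiv_eq n 1 le_rfl (by omega)]
  simp [Nat.choose_one_right]
  omega

lemma dd_top (m : ℕ) : dd (2*m+3) (m+2) = 0 := by
  rw [dd, show 2*m+3-(m+2) = m+1 by omega, Nat.choose_eq_zero_of_lt (by omega)]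
  simp

lemma dd_rec (F : Type*) [Field F] [CharP F 2] (m j : ℕ) (hj : j ≤ m) :
    ((dd (2*m+5) (j+2) : ℕ) : F) = (dd (2*m+3) (j+2) : ℕ) + (dd (2*m+1) j : ℕ) := by
  have h2 : (2 : F) = 0 := by exact_mod_cast CharP.cast_eq_zero F 2
  set k := 2*m+1-j with hkdef
  have hk1 : 1 ≤ k := by omega
  have h5 : dd (2*m+5) (j+2) = Nat.choose (k+2) (j+2) + Nat.choose (k+1) (j+1) := by
    rw [cdiv_eq _ _ (by omega) (by omega),
      show 2*m+5-(j+2) = k+2 by omega, show k+2-1 = k+1 from rfl,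
      show j+2-1 = j+1 from rfl]
  have h3 : dd (2*m+3) (j+2) = Nat.choose k (j+2) + Nat.choose (k-1) (j+1) := by
    rw [cdiv_eq _ _ (by omega) (by omega),
      show 2*m+3-(j+2) = k by omega, show j+2-1 = j+1 from rfl]
  rcases Nat.eq_zero_or_pos j with hj0 | hjpos
  · subst hj0
    have h1 : dd (2*m+1) 0 = 1 := dd_zero _ (by omega)
    have hk : k = 2*m+1 := by omega
    have hp := pascal0 k hk1
    rw [h5, h3, h1]
    have hc := congrArg (Nat.cast : ℕ → F) hp
    have hkc : ((k - 1 : ℕ) : F) = (k : F) - 1 := by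
      rw [Nat.cast_sub hk1]; norm_num
    push_cast at hc
    push_cast
    norm_num [Nat.choose_one_right] at hc ⊢
    rw [hkc] at hc ⊢
    linear_combination hc + ((k : F) + 1) * h2
  · have h1 : dd (2*m+1) j = Nat.choose k j + Nat.choose (k-1) (j-1) := by
      rw [cdiv_eq _ _ hjpos (by omega), ← hkdef]
    rw [h5, h3, h1]
    have hc := congrArg (Nat.cast : ℕ → F) (pascal4 k j hk1 hjpos)
    push_cast at hc
    push_cast
    linear_combination hc + ((Nat.choose (k+1) (j+1) : F) - (Nat.choose (k-1) (j-1) : F)) * h2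

lemma sum_peel {M : Type*} [AddCommMonoid M] (n : ℕ) (g : ℕ → M) :
    ∑ i ∈ Finset.range (n+3), g i = (∑ i ∈ Finset.range (n+1), g (i+2)) + g 1 + g 0 := by
  rw [show n+3 = n+2+1 from rfl, Finset.sum_range_succ' g (n+2),
      show n+2 = n+1+1 from rfl, Finset.sum_range_succ' (fun i => g (i+1)) (n+1)]

/-- The polynomial `F_n(x) = Σ_{i=0}^{m} ((n/(n-i))·C(n-i,i)) x^{m-i}` for `n = 2m+1`,
with coefficients the exact natural-number quotients `(n·C(n-i,i))/(n-i)`. -/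
noncomputable def FnPoly (F : Type*) [Field F] (m : ℕ) : F[X] :=
  ∑ i ∈ Finset.range (m + 1),
    C ((((2 * m + 1) * Nat.choose (2 * m + 1 - i) i) / (2 * m + 1 - i) : ℕ) : F) *
      X ^ (m - i)

lemma FnPoly_eval (F : Type*) [Field F] (m : ℕ) (t : F) :
    (FnPoly F m).eval t = ∑ i ∈ Finset.range (m+1), ((dd (2*m+1) i : ℕ) : F) * t^(m-i) := by
  rw [FnPoly, eval_finset_sum]
  refine Finset.sum_congr rfl fun i _ => ?_
  rw [eval_mul, eval_C, eval_pow, eval_X]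
  rfl

lemma eval_rec (F : Type*) [Field F] [CharP F 2] (m : ℕ) (t : F) :
    (FnPoly F (m+2)).eval t = t * (FnPoly F (m+1)).eval t + (FnPoly F m).eval t := by
  have h2 : (2 : F) = 0 := by exact_mod_cast CharP.cast_eq_zero F 2
  rw [FnPoly_eval, FnPoly_eval, FnPoly_eval, Finset.mul_sum]
  simp only [show m+2+1 = m+3 from rfl, show m+1+1 = m+2 from rfl,
    show 2*(m+2)+1 = 2*m+5 by ring, show 2*(m+1)+1 = 2*m+3 by ring]
  have hmid : ∀ i ∈ Finset.range (m+2),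
      t * (((dd (2*m+3) i : ℕ) : F) * t^(m+1-i)) = ((dd (2*m+3) i : ℕ) : F) * t^(m+2-i) := by
    intro i hi
    rw [Finset.mem_range] at hi
    rw [show m+2-i = (m+1-i)+1 by omega, pow_succ]
    ring
  rw [Finset.sum_congr rfl hmid]
  have hext : ∑ i ∈ Finset.range (m+3), ((dd (2*m+3) i : ℕ) : F) * t^(m+2-i)
      = ∑ i ∈ Finset.range (m+2), ((dd (2*m+3) i : ℕ) : F) * t^(m+2-i) := by
    rw [show m+3 = m+2+1 from rfl, Finset.sum_range_succ, dd_top m]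
    simp
  rw [← hext, sum_peel, sum_peel]
  simp only [show m+2-1 = m+1 from rfl, show m+2-0 = m+2 from rfl]
  have hb0 : ((dd (2*m+5) 0 : ℕ) : F) = ((dd (2*m+3) 0 : ℕ) : F) := by
    rw [dd_zero _ (by omega), dd_zero _ (by omega)]
  have hb1 : ((dd (2*m+5) 1 : ℕ) : F) = ((dd (2*m+3) 1 : ℕ) : F) := by
    rw [dd_one _ (by omega), dd_one _ (by omega)]
    push_cast
    linear_combination h2
  have hsum : ∑ i ∈ Finset.range (m+1), ((dd (2*m+5) (i+2) : ℕ) : F) * t^(m+2-(i+2))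
      = ∑ i ∈ Finset.range (m+1), ((dd (2*m+3) (i+2) : ℕ) : F) * t^(m+2-(i+2))
        + ∑ i ∈ Finset.range (m+1), ((dd (2*m+1) i : ℕ) : F) * t^(m-i) := by
    rw [← Finset.sum_add_distrib]
    refine Finset.sum_congr rfl fun i hi => ?_
    rw [Finset.mem_range] at hi
    rw [show m+2-(i+2) = m-i by omega, dd_rec F m i (by omega)]
    ring
  linear_combination hsum + (t^(m+1)) * hb1 + (t^(m+2)) * hb0

/-- In characteristic 2, for odd `n = 2m+1` and every nonzero `y` one has
`(y+1) · y^m · F_n(y + y⁻¹) = y^n + 1`. -/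
theorem dickson_first_char_two_phi_FnPoly
    (F : Type*) [Field F] [CharP F 2] (m : ℕ) (y : F) (hy : y ≠ 0) :
    (y + 1) * y ^ m * (FnPoly F m).eval (y + y⁻¹) = y ^ (2 * m + 1) + 1 := by
  have h2 : (2 : F) = 0 := by exact_mod_cast CharP.cast_eq_zero F 2
  have key : ∀ k : ℕ,
      (∀ z : F, z ≠ 0 → (z + 1) * z ^ k * (FnPoly F k).eval (z + z⁻¹) = z ^ (2*k+1) + 1)
      ∧ (∀ z : F, z ≠ 0 →
          (z + 1) * z ^ (k+1) * (FnPoly F (k+1)).eval (z + z⁻¹) = z ^ (2*(k+1)+1) + 1) := by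
    intro k
    induction k with
    | zero =>
      constructor
      · intro z hz
        rw [FnPoly_eval]
        simp [show dd 1 0 = 1 from rfl]
      · intro z hz
        have hyi : z * z⁻¹ = 1 := mul_inv_cancel₀ hz
        rw [FnPoly_eval]
        rw [show (0:ℕ)+1+1 = 2 from rfl]
        rw [Finset.sum_range_succ, Finset.sum_range_one]
        norm_num [show dd 3 0 = 1 from rfl, show dd 3 1 = 3 from rfl]
        linear_combination (z+1)*hyi + (2*z^2+2*z)*h2
    | succ k ih =>
      refine ⟨ih.2, ?_⟩
      intro z hz
      have hyi : z * z⁻¹ = 1 := mul_inv_cancel₀ hz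
      have ih1 := ih.2 z hz
      have ih0 := ih.1 z hz
      have hrec := eval_rec F k (z + z⁻¹)
      simp only [show k+1+1 = k+2 from rfl]
      linear_combination (z+1)*z^(k+2)*hrec
        + ((z+1)*z^(k+1)*((FnPoly F (k+1)).eval (z+z⁻¹)))*hyi
        + (z^2+1)*ih1 + z^2*ih0 + (z^(2*k+3)+z^2)*h2
  exact (key m).1 y hy
end

section
/- Let R be a commutative ring, a ∈ R, and m, n natural numbers. Then D_{mn}(x, a) = D_m(D_n(x, a), a^n); that is, the Dickson polynomial of the first kind satisfies dickson 1 a (m·n) = (dickson 1 (a^n) m).comp (dickson 1 a n). -/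
open Polynomial

private theorem dickson_eval_add_aux {R : Type*} [CommRing R] (x y : R) :
    ∀ N : ℕ, (dickson 1 (x * y) N).eval (x + y) = x ^ N + y ^ N
  | 0 => by simp [dickson_zero]; norm_num
  | 1 => by simp
  | (N + 2) => by
    simp only [dickson_add_two, eval_sub, eval_mul, eval_X, eval_C,
      dickson_eval_add_aux x y (N + 1), dickson_eval_add_aux x y N]
    ring

private theorem dickson_first_comp_complex (a : ℂ) (m n : ℕ) :
    dickson 1 a (m * n) = (dickson 1 (a ^ n) m).comp (dickson 1 a n) := by
  apply Polynomial.funext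
  intro t
  obtain ⟨s, hs⟩ := IsAlgClosed.exists_pow_nat_eq (t ^ 2 - 4 * a) two_pos
  set x : ℂ := (t + s) / 2 with hxdef
  set y : ℂ := (t - s) / 2 with hydef
  have hxy : x * y = a := by
    rw [hxdef, hydef]
    field_simp
    linear_combination -hs
  have hx : x + y = t := by rw [hxdef, hydef]; ring
  rw [eval_comp, ← hxy, ← hx, dickson_eval_add_aux, dickson_eval_add_aux,
    mul_pow, dickson_eval_add_aux, ← pow_mul, ← pow_mul, Nat.mul_comm]

private theorem dickson_first_comp_int (m n : ℕ) :
    dickson 1 (X : ℤ[X]) (m * n) =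
      (dickson 1 ((X : ℤ[X]) ^ n) m).comp (dickson 1 X n) := by
  refine Polynomial.ext fun k => ?_
  have hinj : Function.Injective (Polynomial.map (Int.castRingHom ℂ)) :=
    Polynomial.map_injective _ Int.cast_injective
  apply hinj
  apply Polynomial.funext
  intro a
  have φ : ℤ[X] →+* ℂ := eval₂RingHom (Int.castRingHom ℂ) a
  have key : ∀ N : ℕ, ∀ b : ℤ[X],
      Polynomial.map (eval₂RingHom (Int.castRingHom ℂ) a) (dickson 1 b N)
        = dickson 1 ((eval₂RingHom (Int.castRingHom ℂ) a) b) N := fun N b =>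
    map_dickson _ N
  have h := dickson_first_comp_complex ((eval₂RingHom (Int.castRingHom ℂ) a) X) m n
  have hmapped :
      Polynomial.map (eval₂RingHom (Int.castRingHom ℂ) a) (dickson 1 (X : ℤ[X]) (m * n))
        = Polynomial.map (eval₂RingHom (Int.castRingHom ℂ) a)
            ((dickson 1 ((X : ℤ[X]) ^ n) m).comp (dickson 1 X n)) := by
    rw [Polynomial.map_comp, key, key, key, map_pow, h]
  have hcoeff := congrArg (fun p => Polynomial.coeff p k) hmapped
  simp only [Polynomial.coeff_map] at hcoeff
  simp only [coe_eval₂RingHom, eval₂_eq_eval_map] at hcoeff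
  exact hcoeff

/-- Composition identity for Dickson polynomials of the first kind:
`D_{mn}(x, a) = D_m(D_n(x, a), a^n)`. -/
theorem dickson_first_comp
    (R : Type*) [CommRing R] (a : R) (m n : ℕ) :
    dickson 1 a (m * n) = (dickson 1 (a ^ n) m).comp (dickson 1 a n) := by
  have h := congrArg (Polynomial.map (eval₂RingHom (Int.castRingHom R) a))
    (dickson_first_comp_int m n)
  rwa [Polynomial.map_comp, map_dickson, map_dickson, map_dickson, map_pow,
    coe_eval₂RingHom, eval₂_X] at h
end

section
/- Let R be a commutative ring of prime characteristic p, a ∈ R, and n, r natural numbers. Then D_{n·p^r}(x, a) = (D_n(x, a))^(p^r); that is, dickson 1 a (n·p^r) = (dickson 1 a n)^(p^r). -/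
/-!
For `y ≠ 0` and `x = y + a / y` one has `D_m(x, a) = y ^ m + (a / y) ^ m`, so in characteristic `p`
both sides of the identity take the value `y ^ (n p^r) + (a / y) ^ (n p^r)` at `x`, by Frobenius.
Over an infinite field these `x` form an infinite set, which forces the polynomial identity. A
general ring of characteristic `p` is reached by specialising the generic parameter `X` of
`(ZMod p)[X]`, which embeds into its (infinite) fraction field.
-/

open Polynomial

theorem infinite_image_add_div_compl_zero {K : Type*} [Field K] [Infinite K] (b : K) :
    ((fun y => y + b / y) '' {0}ᶜ).Infinite := by
  intro hfin
  refine (Set.finite_singleton (0 : K)).infinite_compl (Set.Finite.subset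
    (hfin.preimage' fun x _ => ?_) (Set.subset_preimage_image _ _))
  -- `y ≠ 0` lies over `x` iff `y ^ 2 - x y + b = 0`; the extra factor `X` catches `y = 0`
  have hq : (X * (X ^ 2 - C x * X + C b) : K[X]) ≠ 0 := by
    apply Monic.ne_zero
    monicity!
  refine (finite_setOfPred_isRoot hq).subset fun y (hy : y + b / y = x) => ?_
  rcases eq_or_ne y 0 with rfl | hy0
  · simp
  · simp only [Set.mem_ofPred_eq, IsRoot, eval_mul, eval_X, eval_add, eval_sub, eval_pow, eval_C,
      ← hy]
    field_simp
    ring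

namespace Polynomial

theorem dickson_one_eval_add_of_mul_eq {R : Type*} [CommRing R] {a x y : R} (h : x * y = a) :
    ∀ n, (dickson 1 a n).eval (x + y) = x ^ n + y ^ n
  | 0 => by norm_num [dickson_zero]
  | 1 => by simp
  | n + 2 => by
    rw [dickson_add_two, eval_sub, eval_mul, eval_mul, eval_X, eval_C,
      dickson_one_eval_add_of_mul_eq h (n + 1), dickson_one_eval_add_of_mul_eq h n, ← h]
    ring

theorem eq_of_eval_add_div_eq {K : Type*} [Field K] [Infinite K] (b : K) {f g : K[X]}
    (h : ∀ y ≠ 0, f.eval (y + b / y) = g.eval (y + b / y)) : f = g := by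
  refine eq_of_infinite_eval_eq f g ((infinite_image_add_div_compl_zero b).mono ?_)
  rintro _ ⟨y, hy, rfl⟩
  exact h y hy

theorem dickson_one_mul_pow_char_of_infinite {K : Type*} [Field K] [Infinite K] (p : ℕ)
    [Fact p.Prime] [CharP K p] (b : K) (n r : ℕ) :
    dickson 1 b (n * p ^ r) = dickson 1 b n ^ p ^ r := by
  refine eq_of_eval_add_div_eq b fun y hy => ?_
  have hyb : y * (b / y) = b := mul_div_cancel₀ b hy
  rw [eval_pow, dickson_one_eval_add_of_mul_eq hyb, dickson_one_eval_add_of_mul_eq hyb,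
    add_pow_char_pow, pow_mul, pow_mul]

end Polynomial

/-- In characteristic `p`, `D_{n·p^r}(x, a) = (D_n(x, a))^(p^r)`. -/
theorem dickson_first_pow_char
    (R : Type*) [CommRing R] (p : ℕ) [hp : Fact p.Prime] [CharP R p]
    (a : R) (n r : ℕ) :
    dickson 1 a (n * p ^ r) = (dickson 1 a n) ^ (p ^ r) := by
  let K := FractionRing (ZMod p)[X]
  have hinj : Function.Injective (algebraMap (ZMod p)[X] K) := IsFractionRing.injective _ _
  have : CharP K p := charP_of_injective_algebraMap hinj p
  have : Infinite K := Infinite.of_injective _ hinj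
  have huniv : dickson 1 (X : (ZMod p)[X]) (n * p ^ r) = dickson 1 X n ^ p ^ r := by
    apply map_injective _ hinj
    rw [map_dickson, Polynomial.map_pow, map_dickson]
    exact dickson_one_mul_pow_char_of_infinite p _ n r
  simpa only [map_dickson, Polynomial.map_pow, coe_eval₂RingHom, eval₂_X] using
    congrArg (map (eval₂RingHom (ZMod.castHom (dvd_refl p) R) a)) huniv
end

section
/- Let R be a commutative ring, a, b ∈ R, and n a natural number. Then b^n · D_n(x, a) = D_n(b·x, b²·a); that is, C(b^n) * dickson 1 a n = (dickson 1 (b²·a) n).comp (C b * X). -/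
open Polynomial

/-- Scaling identity: `b^n · D_n(x, a) = D_n(b·x, b²·a)`. -/
theorem dickson_first_scale
    (R : Type*) [CommRing R] (a b : R) (n : ℕ) :
    C (b ^ n) * dickson 1 a n = (dickson 1 (b ^ 2 * a) n).comp (C b * X) := by
  induction n using Nat.twoStepInduction with
  | zero => simp [dickson_zero]
  | one => simp [dickson_one]
  | more n ih1 ih2 =>
    simp only [dickson_add_two, sub_comp, mul_comp, C_comp, X_comp]
    rw [← ih1, ← ih2]
    simp only [pow_succ, C_mul, C_1, mul_one]
    ring_nf
    simp [C_1]
end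

section
/- Let R be a commutative ring of odd prime characteristic p, a ∈ R, and let n, m, r be natural numbers with n+1 = (m+1)·p^r. Then E_n(x, a) = (E_m(x, a))^(p^r) · (x² − 4a)^((p^r − 1)/2); that is, dickson 2 a n = (dickson 2 a m)^(p^r) * (X² − C(4a))^((p^r − 1)/2). -/
open Polynomial

/-!
Write `x = y + z` and `a = y * z`. Then `(y - z) * E_n(x, a) = y ^ (n + 1) - z ^ (n + 1)`, so the
Frobenius gives `(y - z) * E_n = ((y - z) * E_m) ^ p ^ r`, while `(y - z) ^ 2 = x ^ 2 - 4 * a`.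
Over an algebraically closed field every pair `(x, a)` has this form, which proves the identity
multiplied by `X ^ 2 - C (4 * a)`, a non-zero-divisor that can then be cancelled. The general case
follows from the universal one, `a = X` over `(ZMod p)[X]`, whose fraction field embeds into an
algebraically closed field.
-/

theorem sub_mul_eval_dickson_two {R : Type*} [CommRing R] (y z : R) :
    ∀ n, (y - z) * (dickson 2 (y * z) n).eval (y + z) = y ^ (n + 1) - z ^ (n + 1)
  | 0 => by norm_num [dickson_zero]
  | 1 => by simp only [dickson_one, eval_X]; ring
  | n + 2 => by
    simp only [dickson_add_two, eval_sub, eval_mul, eval_X, eval_C]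
    linear_combination (y + z) * sub_mul_eval_dickson_two y z (n + 1) -
      y * z * sub_mul_eval_dickson_two y z n

theorem mul_eval_dickson_two_pow_char {R : Type*} [CommRing R] (p : ℕ) [Fact p.Prime]
    [CharP R p] (hodd : p ≠ 2) (y z : R) {n m r : ℕ} (h : n + 1 = (m + 1) * p ^ r) :
    ((y + z) ^ 2 - 4 * (y * z)) * (dickson 2 (y * z) n).eval (y + z) =
      ((y + z) ^ 2 - 4 * (y * z)) * ((dickson 2 (y * z) m).eval (y + z) ^ p ^ r *
        ((y + z) ^ 2 - 4 * (y * z)) ^ ((p ^ r - 1) / 2)) := by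
  obtain ⟨k, hk⟩ : Odd (p ^ r) := (Nat.Prime.odd_of_ne_two Fact.out hodd).pow
  have hdisc : (y + z) ^ 2 - 4 * (y * z) = (y - z) ^ 2 := by ring
  have hfrob : (y - z) * (dickson 2 (y * z) n).eval (y + z) =
      ((y - z) * (dickson 2 (y * z) m).eval (y + z)) ^ p ^ r := by
    rw [sub_mul_eval_dickson_two, sub_mul_eval_dickson_two, h, pow_mul,
      pow_mul, sub_pow_char_pow]
  rw [hdisc, hk, Nat.add_sub_cancel, Nat.mul_div_cancel_left k two_pos]
  rw [hk, mul_pow] at hfrob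
  rw [← pow_mul]
  linear_combination (y - z) * hfrob

theorem IsAlgClosed.exists_add_eq_and_mul_eq {K : Type*} [Field K] [IsAlgClosed K] (x a : K) :
    ∃ y z, y + z = x ∧ y * z = a := by
  obtain ⟨y, hy⟩ := IsAlgClosed.exists_root (X ^ 2 - C x * X + C a) <| by
    have hdeg : (X ^ 2 - C x * X + C a).degree = 2 := by compute_degree!
    exact hdeg ▸ two_ne_zero
  refine ⟨y, x - y, by ring, ?_⟩
  simp only [IsRoot, eval_add, eval_sub, eval_mul, eval_pow, eval_X, eval_C] at hy
  linear_combination -hy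

theorem map_dickson_two_pow_mul {R S : Type*} [CommRing R] [CommRing S] (f : R →+* S)
    (a : R) (m q k : ℕ) :
    (dickson 2 a m ^ q * (X ^ 2 - C (4 * a)) ^ k).map f =
      dickson 2 (f a) m ^ q * (X ^ 2 - C (4 * f a)) ^ k := by
  simp [map_dickson, map_ofNat]

theorem dickson_two_pow_char_of_isAlgClosed {K : Type*} [Field K] [IsAlgClosed K] (p : ℕ)
    [Fact p.Prime] [CharP K p] (hodd : p ≠ 2) (a : K) {n m r : ℕ}
    (h : n + 1 = (m + 1) * p ^ r) :
    dickson 2 a n = dickson 2 a m ^ p ^ r * (X ^ 2 - C (4 * a)) ^ ((p ^ r - 1) / 2) := by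
  refine mul_left_cancel₀ (X_pow_sub_C_ne_zero two_pos (4 * a)) (Polynomial.funext fun x ↦ ?_)
  obtain ⟨y, z, rfl, rfl⟩ := IsAlgClosed.exists_add_eq_and_mul_eq x a
  simpa only [eval_mul, eval_pow, eval_sub, eval_X, eval_C] using
    mul_eval_dickson_two_pow_char p hodd y z h

theorem dickson_two_pow_char_of_isDomain {R : Type*} [CommRing R] [IsDomain R] (p : ℕ)
    [Fact p.Prime] [CharP R p] (hodd : p ≠ 2) (a : R) {n m r : ℕ}
    (h : n + 1 = (m + 1) * p ^ r) :
    dickson 2 a n = dickson 2 a m ^ p ^ r * (X ^ 2 - C (4 * a)) ^ ((p ^ r - 1) / 2) := by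
  let g : R →+* AlgebraicClosure (FractionRing R) :=
    (algebraMap _ _).comp (algebraMap R (FractionRing R))
  have hg : Function.Injective g :=
    (algebraMap (FractionRing R) _).injective.comp (IsFractionRing.injective R _)
  have : CharP (AlgebraicClosure (FractionRing R)) p := charP_of_injective_ringHom hg p
  apply map_injective g hg
  rw [map_dickson, map_dickson_two_pow_mul]
  exact dickson_two_pow_char_of_isAlgClosed p hodd (g a) h

/-- In odd characteristic `p`, if `n + 1 = (m + 1)·p^r` then
`E_n(x, a) = (E_m(x, a))^(p^r) · (x² − 4a)^((p^r − 1)/2)`. -/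
theorem dickson_second_pow_char
    (R : Type*) [CommRing R] (p : ℕ) [hp : Fact p.Prime] [CharP R p] (hodd : p ≠ 2)
    (a : R) (n m r : ℕ) (h : n + 1 = (m + 1) * p ^ r) :
    dickson 2 a n =
      (dickson 2 a m) ^ (p ^ r) * (X ^ 2 - C (4 * a)) ^ ((p ^ r - 1) / 2) := by
  let f : (ZMod p)[X] →+* R := eval₂RingHom (ZMod.castHom dvd_rfl R) a
  have hfX : f X = a := eval₂_X _ _
  simpa only [map_dickson, map_dickson_two_pow_mul, hfX] using
    congrArg (map f) (dickson_two_pow_char_of_isDomain p hodd (X : (ZMod p)[X]) h)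
end

section
/- Let R be a commutative ring of characteristic 2 and let n be an even natural number (so that n+1 is odd). Then D_{n+1}(x, 1) = x · E_n(x, 1); that is, dickson 1 1 (n+1) = X * dickson 2 1 n. -/
open Polynomial

private lemma dickson_aux (R : Type*) [CommRing R] [CharP R 2] :
    ∀ n : ℕ, dickson 1 (1 : R) (n + 1) = X * dickson 2 (1 : R) n := by
  intro n
  induction n using Nat.twoStepInduction with
  | zero => rw [dickson_one, dickson_zero]; norm_num
  | one =>
    have h2 : (2 : R[X]) = 0 := CharTwo.two_eq_zero
    rw [dickson_two, dickson_one]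
    simp only [map_one, one_mul, Nat.cast_one]
    rw [show (3 : R[X]) - 1 = 2 by ring, h2]
    ring
  | more n ih1 ih2 =>
    show dickson 1 (1 : R) (n + 1 + 2) = X * dickson 2 (1 : R) (n + 2)
    rw [dickson_add_two 1 (1 : R) (n + 1), dickson_add_two 2 (1 : R) n, ih1, ih2]
    simp only [map_one]
    ring

/-- In characteristic 2, for even `n` one has `D_{n+1}(x, 1) = x · E_n(x, 1)`. -/
theorem dickson_first_eq_X_mul_second_char_two
    (R : Type*) [CommRing R] [CharP R 2] (n : ℕ) (hn : Even n) :
    dickson 1 (1 : R) (n + 1) = X * dickson 2 (1 : R) n :=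
  dickson_aux R n
end

section
/- Let F be a field of characteristic 2 and let n be an even natural number (so that n+1 is odd). Then E_n(x, 1) is the square of a polynomial: there exists g ∈ F[x] of degree n/2 with g(0) ≠ 0 such that dickson 2 1 n = g². -/
open Polynomial

section Aux

variable {F : Type*} [Field F] [CharP F 2]

private lemma dickson_natDeg (n : ℕ) : (dickson 2 (1 : F) n).natDegree = n := by
  induction n using Nat.strong_induction_on with
  | _ n ih =>
    match n with
    | 0 => simp [dickson_zero]; norm_num
    | 1 => simp
    | (m + 2) =>
      have h1 : (dickson 2 (1 : F) (m + 1)).natDegree = m + 1 := ih _ (by omega)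
      have h0 : (dickson 2 (1 : F) m).natDegree = m := ih _ (by omega)
      have hne : dickson 2 (1 : F) (m + 1) ≠ 0 := by
        intro h; rw [h] at h1; simp at h1
      rw [dickson_add_two]
      have hX : (X * dickson 2 (1 : F) (m + 1)).natDegree = m + 2 := by
        rw [natDegree_mul X_ne_zero hne, natDegree_X, h1]; omega
      rw [natDegree_sub_eq_left_of_natDegree_lt]
      · exact hX
      · rw [hX]; simp only [one_div, map_one, one_mul]; omega

private lemma dickson_sq (m : ℕ) :
    dickson 2 (1 : F) (2 * m + 2)
      = (dickson 2 (1 : F) (m + 1) + dickson 2 (1 : F) m) ^ 2 ∧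
    dickson 2 (1 : F) (2 * m + 1) = X * (dickson 2 (1 : F) m) ^ 2 := by
  have h2 : (2 : F[X]) = 0 := CharTwo.two_eq_zero
  have h0 : dickson 2 (1 : F) 0 = 1 := by
    rw [dickson_zero]; push_cast; norm_num
  induction m with
  | zero =>
    refine ⟨?_, ?_⟩
    · show dickson 2 (1 : F) 2 = _
      rw [dickson_two, h0, dickson_one, map_one]
      rw [show ((3 : F[X]) - (2 : ℕ)) = 1 from by push_cast; norm_num]
      linear_combination (- X - 1) * h2
    · show dickson 2 (1 : F) 1 = _
      rw [dickson_one, h0, one_pow, mul_one]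
  | succ m ih =>
    obtain ⟨he, ho⟩ := ih
    set E1 := dickson 2 (1 : F) (m + 1) with hE1
    set E0 := dickson 2 (1 : F) m with hE0
    have step1 : dickson 2 (1 : F) (2 * m + 3) = X * (E1 + E0) ^ 2 + X * E0 ^ 2 := by
      rw [show 2 * m + 3 = (2 * m + 1) + 2 from by ring, dickson_add_two, he, ho,
        map_one, one_mul]
      linear_combination (- X * E0 ^ 2) * h2
    have step2 : dickson 2 (1 : F) (2 * m + 4) =
        X * (X * (E1 + E0) ^ 2 + X * E0 ^ 2) + (E1 + E0) ^ 2 := by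
      rw [show 2 * m + 4 = (2 * m + 2) + 2 from by ring, dickson_add_two, step1, he,
        map_one, one_mul]
      linear_combination (- (E1 + E0) ^ 2) * h2
    have hrec : dickson 2 (1 : F) (m + 2) = X * E1 - E0 := by
      rw [dickson_add_two, map_one, one_mul]
    refine ⟨?_, ?_⟩
    · rw [show 2 * (m + 1) + 2 = 2 * m + 4 from by ring, step2, hrec]
      linear_combination (X ^ 2 * E1 * E0 + X ^ 2 * E0 ^ 2 + 2 * E1 * E0 - X * E1 ^ 2
        + X * E1 * E0) * h2
    · rw [show 2 * (m + 1) + 1 = 2 * m + 3 from by ring, step1]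
      linear_combination (X * E1 * E0 + X * E0 ^ 2) * h2

private lemma dickson_eval_zero (m : ℕ) : (dickson 2 (1 : F) (2 * m)).eval 0 = 1 := by
  induction m with
  | zero => simp [dickson_zero]; norm_num
  | succ m ih =>
    rw [show 2 * (m + 1) = 2 * m + 2 from by ring, dickson_add_two]
    simp only [eval_sub, eval_mul, eval_X, zero_mul, eval_C, map_one, one_mul, zero_sub, ih]
    exact CharTwo.neg_eq 1

end Aux

/-- In characteristic 2, for even `n` the Dickson polynomial of the second kind
`E_n(x, 1)` is the square of a polynomial of degree `n/2` with nonzero constant term. -/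
theorem dickson_second_char_two_is_square
    (F : Type*) [Field F] [CharP F 2] (n : ℕ) (hn : Even n) :
    ∃ g : F[X], g.natDegree = n / 2 ∧ g.eval 0 ≠ 0 ∧ dickson 2 (1 : F) n = g ^ 2 := by
  obtain ⟨m, rfl⟩ := hn
  have hmm : m + m = 2 * m := by ring
  match m with
  | 0 =>
    refine ⟨1, by simp, by simp, ?_⟩
    simp [dickson_zero]; norm_num
  | (k + 1) =>
    refine ⟨dickson 2 (1 : F) (k + 1) + dickson 2 (1 : F) k, ?_, ?_, ?_⟩
    · rw [natDegree_add_eq_left_of_natDegree_lt, dickson_natDeg]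
      · omega
      · rw [dickson_natDeg, dickson_natDeg]; omega
    · intro h
      have hsq : ((dickson 2 (1 : F) (k + 1) + dickson 2 (1 : F) k).eval 0) ^ 2
          = (dickson 2 (1 : F) (2 * k + 2)).eval 0 := by
        rw [(dickson_sq k).1, eval_pow]
      rw [h, show 2 * k + 2 = 2 * (k + 1) from by ring, dickson_eval_zero] at hsq
      simp at hsq
    · rw [show k + 1 + (k + 1) = 2 * k + 2 from by ring]
      exact (dickson_sq k).1
end

section
/- Let R be a commutative ring of characteristic 2, and let n, s, r be natural numbers with s even and n+1 = 2^r·(s+1). Then E_n(x, 1) = (E_s(x, 1))^(2^r) · x^(2^r − 1); that is, dickson 2 1 n = (dickson 2 1 s)^(2^r) * X^(2^r − 1). -/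
open Polynomial

private lemma dickson_double_key (R : Type*) [CommRing R] [CharP R 2] (m : ℕ) :
    dickson 2 (1 : R) (2 * m + 1) = (dickson 2 (1 : R) m) ^ 2 * X ∧
    dickson 2 (1 : R) (2 * m + 2) = (dickson 2 (1 : R) (m + 1) + dickson 2 (1 : R) m) ^ 2 := by
  have h2 : (2 : R[X]) = 0 := by
    have := CharP.cast_eq_zero R[X] 2
    exact_mod_cast this
  induction m with
  | zero =>
    constructor
    · rw [dickson_one, dickson_zero]; norm_num
    · rw [dickson_two, dickson_one, dickson_zero, map_one]
      norm_num
      linear_combination (-(1 : R[X]) - X) * h2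
  | succ m ih =>
    obtain ⟨ih1, ih2⟩ := ih
    have e1 : dickson 2 (1 : R) (2 * (m + 1) + 1) =
        (dickson 2 (1 : R) (m + 1)) ^ 2 * X := by
      have h3 : 2 * (m + 1) + 1 = (2 * m + 1) + 2 := by ring
      rw [h3, dickson_add_two, show (2 * m + 1) + 1 = 2 * m + 2 from rfl, ih1, ih2, map_one]
      linear_combination (X * dickson 2 (1:R) m * dickson 2 (1:R) (m+1)) * h2
    refine ⟨e1, ?_⟩
    have h4 : 2 * (m + 1) + 2 = (2 * m + 2) + 2 := by ring
    rw [h4, dickson_add_two, show (2 * m + 2) + 1 = 2 * (m+1) + 1 from by ring, e1,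
      ih2, map_one, show m + 1 + 1 = (m + 1) + 1 from rfl, dickson_add_two, map_one]
    linear_combination (- X * dickson 2 (1:R) (m+1) ^ 2
      + X * dickson 2 (1:R) m * dickson 2 (1:R) (m+1)
      - dickson 2 (1:R) m ^ 2 - dickson 2 (1:R) (m+1) ^ 2) * h2

/-- In characteristic 2, if `s` is even and `n + 1 = 2^r·(s + 1)`, then
`E_n(x, 1) = (E_s(x, 1))^(2^r) · x^(2^r − 1)`. -/
theorem dickson_second_char_two_reduction
    (R : Type*) [CommRing R] [CharP R 2] (n s r : ℕ) (hs : Even s)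
    (h : n + 1 = 2 ^ r * (s + 1)) :
    dickson 2 (1 : R) n = (dickson 2 (1 : R) s) ^ (2 ^ r) * X ^ (2 ^ r - 1) := by
  induction r generalizing n with
  | zero => simp_all
  | succ r ih =>
    set m := 2 ^ r * (s + 1) - 1 with hm
    have hm1 : m + 1 = 2 ^ r * (s + 1) := by
      have : 1 ≤ 2 ^ r * (s + 1) := Nat.one_le_iff_ne_zero.2 (by positivity)
      omega
    have hn : n = 2 * m + 1 := by
      have : n + 1 = 2 * (m + 1) := by rw [hm1, h]; ring
      omega
    have h1 : 2 ^ (r + 1) = 2 ^ r * 2 := by ring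
    have h2 : 2 ^ (r + 1) - 1 = (2 ^ r - 1) * 2 + 1 := by
      have : 1 ≤ 2 ^ r := Nat.one_le_two_pow
      omega
    rw [hn, (dickson_double_key R m).1, ih m hm1, h2, h1, pow_mul, pow_add, pow_mul,
      mul_pow, pow_one]
    ring
end
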